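/- arXiv:1304.3481 — 7 statements merged into one kernel-verified Lean document; each statement's English description precedes it below -/
import Mathlib

section
/- Let p and q be coprime positive integers and let r be a nonnegative integer. The map F ↦ (F^p, F^q) is a bijection from the set {F ∈ ℂ[z] : F(0) = 1 and deg F ≤ r} onto the set {(U,V) ∈ ℂ[z] × ℂ[z] : U(0) = 1, V(0) = 1, deg U ≤ pr, deg V ≤ qr, and U^q = V^p}. -/
/-!
If `U ^ q = V ^ p` with `p, q` coprime, Bézout gives an `F = U ^ a * V ^ b` in the field of
rational functions with `F ^ p = U` and `F ^ q = V`; it is integral over `ℂ[z]`, hence a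
polynomial since `ℂ[z]` is integrally closed. Injectivity and `F(0) = 1` come from the fact
that `x ^ p` and `x ^ q` together determine `x`.
-/

open Polynomial

theorem eq_of_pow_eq_pow_of_coprime {G₀ : Type*} [CommGroupWithZero G₀] {a b : G₀} {m n : ℕ}
    (hmn : m.Coprime n) (hm : a ^ m = b ^ m) (hn : a ^ n = b ^ n) : a = b := by
  rcases eq_or_ne b 0 with rfl | hb
  · rcases Nat.eq_zero_or_pos m with rfl | hm0
    · simpa [(Nat.coprime_zero_left n).mp hmn] using hn
    · exact (pow_eq_zero_iff hm0.ne').mp (hm.trans (zero_pow hm0.ne'))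
  · rw [← div_eq_one_iff_eq hb, ← pow_eq_one_iff_of_coprime hmn, div_pow, div_pow, hm, hn,
      div_self (pow_ne_zero _ hb), div_self (pow_ne_zero _ hb)]
    exact ⟨rfl, rfl⟩

theorem IsDomain.eq_of_pow_eq_pow_of_coprime {R : Type*} [CommRing R] [IsDomain R] {a b : R}
    {m n : ℕ} (hmn : m.Coprime n) (hm : a ^ m = b ^ m) (hn : a ^ n = b ^ n) : a = b := by
  refine IsFractionRing.injective R (FractionRing R) (_root_.eq_of_pow_eq_pow_of_coprime hmn ?_ ?_)
  <;> simp only [← map_pow, hm, hn]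

theorem IsIntegrallyClosed.exists_pow_eq_of_pow_eq_pow_of_coprime {R : Type*} [CommRing R]
    [IsDomain R] [IsIntegrallyClosed R] {a b : R} {m n : ℕ} (hmn : m.Coprime n)
    (hab : a ^ m = b ^ n) : ∃ c, a = c ^ n ∧ b = c ^ m := by
  let K := FractionRing R
  obtain ⟨c, ha, hb⟩ := (pow_eq_pow_iff_of_coprime hmn).mp
    (by simp only [← map_pow, hab] : algebraMap R K a ^ m = algebraMap R K b ^ n)
  have hc : IsIntegral R c := by
    rcases Nat.eq_zero_or_pos n with rfl | hn
    · rw [(Nat.coprime_zero_right m).mp hmn, pow_one] at hb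
      exact hb ▸ isIntegral_algebraMap
    · exact (ha ▸ isIntegral_algebraMap (R := R) (A := K) (x := a)).of_pow hn
  obtain ⟨d, rfl⟩ := IsIntegrallyClosed.isIntegral_iff.mp hc
  exact ⟨d, IsFractionRing.injective R K (by rw [ha, map_pow]),
    IsFractionRing.injective R K (by rw [hb, map_pow])⟩

theorem Polynomial.coeff_zero_pow {R : Type*} [CommSemiring R] (F : R[X]) (k : ℕ) :
    (F ^ k).coeff 0 = F.coeff 0 ^ k := by
  simp only [← constantCoeff_apply, map_pow]

theorem stmt_1_general (p q r : ℕ) (hp : 0 < p) (hpq : Nat.Coprime p q) :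
    Set.BijOn (fun F : Polynomial ℂ => (F ^ p, F ^ q))
      {F : Polynomial ℂ | F.coeff 0 = 1 ∧ F.natDegree ≤ r}
      {UV : Polynomial ℂ × Polynomial ℂ |
        UV.1.coeff 0 = 1 ∧ UV.2.coeff 0 = 1 ∧
        UV.1.natDegree ≤ p * r ∧ UV.2.natDegree ≤ q * r ∧ UV.1 ^ q = UV.2 ^ p} := by
  refine ⟨?_, ?_, ?_⟩
  · rintro F ⟨hF0, hFr⟩
    refine ⟨by simp [coeff_zero_pow, hF0], by simp [coeff_zero_pow, hF0],
      natDegree_pow_le.trans (by gcongr), natDegree_pow_le.trans (by gcongr), ?_⟩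
    rw [← pow_mul, ← pow_mul, mul_comm]
  · rintro F - G - hFG
    obtain ⟨hFGp, hFGq⟩ := Prod.mk.inj hFG
    exact IsDomain.eq_of_pow_eq_pow_of_coprime hpq hFGp hFGq
  · rintro ⟨U, V⟩ ⟨hU0, hV0, hUr, -, hUV⟩
    obtain ⟨F, rfl, rfl⟩ :=
      IsIntegrallyClosed.exists_pow_eq_of_pow_eq_pow_of_coprime hpq.symm hUV
    refine ⟨F, ⟨?_, ?_⟩, rfl⟩
    · rw [coeff_zero_pow] at hU0 hV0
      exact (pow_eq_one_iff_of_coprime hpq).mp ⟨hU0, hV0⟩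
    · rw [natDegree_pow] at hUr
      exact Nat.le_of_mul_le_mul_left hUr hp

theorem stmt_1 (p q r : ℕ) (hp : 0 < p) (hq : 0 < q) (hpq : Nat.Coprime p q) :
    Set.BijOn (fun F : Polynomial ℂ => (F ^ p, F ^ q))
      {F : Polynomial ℂ | F.coeff 0 = 1 ∧ F.natDegree ≤ r}
      {UV : Polynomial ℂ × Polynomial ℂ |
        UV.1.coeff 0 = 1 ∧ UV.2.coeff 0 = 1 ∧
        UV.1.natDegree ≤ p * r ∧ UV.2.natDegree ≤ q * r ∧ UV.1 ^ q = UV.2 ^ p} :=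
  stmt_1_general p q r hp hpq
end

section
/- Let p and q be coprime positive integers and let r be a positive integer. Suppose U, V ∈ ℂ[z] satisfy U(0) = 1, V(0) = 1, the coefficients of U vanish in all degrees 1, 2, …, r, the coefficients of V vanish in all degrees 1, 2, …, r, deg U ≤ pr, deg V ≤ qr, and U^q = V^p. Then U = 1 and V = 1. -/
/-!
Since `p` and `q` are coprime and `ℂ[z]` is integrally closed, `U ^ q = V ^ p` forces
`U = W ^ p` and `V = W ^ q` for a single polynomial `W`, and `W(0) = 1`. The degree bound on `U`
gives `deg W ≤ r`. If `W ≠ 1`, its lowest nonconstant term `w z ^ k` has `k ≤ r`, and the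
coefficient of `z ^ k` in `U = W ^ p` is `p * w ≠ 0`, contradicting the gap in `U`.
-/

open Polynomial

theorem IsIntegrallyClosed.exists_eq_pow_of_pow_eq_pow_of_coprime {R : Type*} [CommRing R]
    [IsDomain R] [IsIntegrallyClosed R] {a b : R} {m n : ℕ} (hmn : m.Coprime n)
    (h : a ^ m = b ^ n) :
    ∃ c, a = c ^ n ∧ b = c ^ m := by
  rcases Nat.eq_zero_or_pos n with rfl | hn
  · obtain rfl : m = 1 := Nat.coprime_zero_right m |>.mp hmn
    exact ⟨b, by simpa using h, (pow_one b).symm⟩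
  have hfrac : (algebraMap R (FractionRing R) a) ^ m = (algebraMap R (FractionRing R) b) ^ n := by
    rw [← map_pow, ← map_pow, h]
  obtain ⟨c, hac, hbc⟩ := (pow_eq_pow_iff_of_coprime hmn).mp hfrac
  obtain ⟨d, rfl⟩ : ∃ d : R, algebraMap R (FractionRing R) d = c :=
    IsIntegrallyClosed.exists_algebraMap_eq_of_isIntegral_pow hn
      (hac ▸ isIntegral_algebraMap)
  refine ⟨d, ?_, ?_⟩ <;> apply IsFractionRing.injective R (FractionRing R) <;> simpa

namespace Polynomial

variable {R : Type*} [CommSemiring R]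

theorem coeff_pow_eq_natCast_mul_coeff {W : R[X]} (h0 : W.coeff 0 = 1) {k : ℕ} (hk : 0 < k)
    (hgap : ∀ j, 0 < j → j < k → W.coeff j = 0) (n : ℕ) :
    (W ^ n).coeff k = n * W.coeff k := by
  induction n with
  | zero => simp [coeff_one, hk.ne']
  | succ n ih =>
    have hlow : ∑ j ∈ Finset.range k, W.coeff j * (W ^ n).coeff (k - j) = (W ^ n).coeff k := by
      rw [Finset.sum_eq_single_of_mem 0 (Finset.mem_range.mpr hk)]
      · simp [h0]
      · intro j hj hj0
        rw [hgap j (Nat.pos_of_ne_zero hj0) (Finset.mem_range.mp hj), zero_mul]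
    rw [pow_succ', coeff_mul, Finset.Nat.sum_antidiagonal_eq_sum_range_succ_mk,
      Finset.sum_range_succ, hlow, ih, Nat.sub_self, coeff_zero_eq_eval_zero, eval_pow,
      ← coeff_zero_eq_eval_zero, h0, one_pow]
    push_cast
    ring

theorem eq_one_of_coeff_pow_eq_zero [NoZeroDivisors R] [CharZero R] {W : R[X]}
    (h0 : W.coeff 0 = 1) {n : ℕ} (hn : n ≠ 0)
    (hgap : ∀ i, 0 < i → i ≤ W.natDegree → (W ^ n).coeff i = 0) : W = 1 := by
  have hvanish : ∀ i, 0 < i → W.coeff i = 0 := by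
    intro i
    induction i using Nat.strong_induction_on with
    | _ i ih =>
      intro hi
      by_cases hiW : i ≤ W.natDegree
      · have hcoeff := coeff_pow_eq_natCast_mul_coeff h0 hi (fun j hj hji => ih j hji hj) n
        rw [hgap i hi hiW] at hcoeff
        exact (mul_eq_zero.mp hcoeff.symm).resolve_left (Nat.cast_ne_zero.mpr hn)
      · exact coeff_eq_zero_of_natDegree_lt (not_le.mp hiW)
  ext i
  rcases Nat.eq_zero_or_pos i with rfl | hi
  · simp [h0]
  · simp [hvanish i hi, coeff_one, hi.ne']

end Polynomial

theorem stmt_2_general (p q r : ℕ) (hp : 0 < p) (hpq : Nat.Coprime p q)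
    (U V : Polynomial ℂ) (hU0 : U.coeff 0 = 1) (hV0 : V.coeff 0 = 1)
    (hUlow : ∀ i : ℕ, 1 ≤ i → i ≤ r → U.coeff i = 0)
    (hUdeg : U.natDegree ≤ p * r)
    (h : U ^ q = V ^ p) : U = 1 ∧ V = 1 := by
  obtain ⟨W, rfl, rfl⟩ := IsIntegrallyClosed.exists_eq_pow_of_pow_eq_pow_of_coprime hpq.symm h
  have hW0 : W.coeff 0 = 1 := by
    rw [← pow_one (W.coeff 0), ← hpq.gcd_eq_one, pow_gcd_eq_one]
    simpa [coeff_zero_eq_eval_zero] using And.intro hU0 hV0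
  have hWdeg : W.natDegree ≤ r := by
    rw [natDegree_pow] at hUdeg
    exact Nat.le_of_mul_le_mul_left hUdeg hp
  have hW : W = 1 :=
    eq_one_of_coeff_pow_eq_zero hW0 hp.ne' fun i hi hiW => hUlow i hi (hiW.trans hWdeg)
  simp [hW]

theorem stmt_2 (p q r : ℕ) (hp : 0 < p) (hq : 0 < q) (hpq : Nat.Coprime p q) (hr : 0 < r)
    (U V : Polynomial ℂ) (hU0 : U.coeff 0 = 1) (hV0 : V.coeff 0 = 1)
    (hUlow : ∀ i : ℕ, 1 ≤ i → i ≤ r → U.coeff i = 0)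
    (hVlow : ∀ i : ℕ, 1 ≤ i → i ≤ r → V.coeff i = 0)
    (hUdeg : U.natDegree ≤ p * r) (hVdeg : V.natDegree ≤ q * r)
    (h : U ^ q = V ^ p) : U = 1 ∧ V = 1 :=
  stmt_2_general p q r hp hpq U V hU0 hV0 hUlow hUdeg h
end

section
/- Let p and q be coprime positive integers. The number of lattice paths from (0,0) to (p,q), each of whose steps increases exactly one coordinate by 1, and each of whose vertices (x,y) satisfies p·y ≤ q·x, is equal to (p+q−1)!/(p!·q!). -/
/-! The cycle lemma. Encode a path by the positions of its `p` east steps among its `p + q` steps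
and give its `i`-th vertex `(x, y)` the height `q x - p y`; the path is admissible iff all heights
are nonnegative. Since the height of vertex `i` is `≡ -p i` modulo `p + q` and `p` is coprime to
`p + q`, the vertices `0, …, p + q - 1` have pairwise distinct heights. The rotation of the word
starting at vertex `k` is admissible exactly when the height of `k` is minimal, so each of the
`C(p + q, p)` words has exactly one admissible rotation among its `p + q`, and double counting
gives `(p + q) · #paths = C(p + q, p) = (p + q)! / (p! q!)`. -/

open Finset Fin.CommRing

namespace RationalDyck

section Words

variable {n : ℕ} [NeZero n]

def rotate (k : Fin n) (S : Finset (Fin n)) : Finset (Fin n) :=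
  S.map (Equiv.subRight k).toEmbedding

@[simp]
lemma mem_rotate {k j : Fin n} {S : Finset (Fin n)} : j ∈ rotate k S ↔ j + k ∈ S := by
  simp [rotate, mem_map_equiv]

@[simp]
lemma card_rotate (k : Fin n) (S : Finset (Fin n)) : #(rotate k S) = #S := card_map _

lemma rotate_rotate (a b : Fin n) (S : Finset (Fin n)) :
    rotate a (rotate b S) = rotate (a + b) S := by
  ext j; simp [add_assoc]

@[simp]
lemma rotate_zero (S : Finset (Fin n)) : rotate 0 S = S := by
  ext j; simp

-- A path with `n` steps is encoded by the set `S` of positions of its east steps; positions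
-- `≥ n` are read modulo `n`, so the word is extended periodically and rotations act on it.
def eastCount (S : Finset (Fin n)) (i : ℕ) : ℕ := #{j ∈ range i | ((j : ℕ) : Fin n) ∈ S}

lemma eastCount_succ (S : Finset (Fin n)) (i : ℕ) :
    eastCount S (i + 1) = eastCount S i + if (i : Fin n) ∈ S then 1 else 0 := by
  simp only [eastCount, card_filter, sum_range_succ]

lemma eastCount_add (S : Finset (Fin n)) (k i : ℕ) :
    eastCount S (k + i) = eastCount S k + eastCount (rotate k S) i := by
  simp only [eastCount, card_filter, sum_range_add, mem_rotate, Nat.cast_add,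
    add_comm _ (k : Fin n)]

lemma eastCount_self (S : Finset (Fin n)) : eastCount S n = #S := by
  rw [eastCount, card_filter,
    ← Fin.sum_univ_eq_sum_range (fun j : ℕ => if (j : Fin n) ∈ S then 1 else 0)]
  simp

def height (p q : ℕ) (S : Finset (Fin n)) (i : ℕ) : ℤ :=
  q * eastCount S i - p * (i - eastCount S i)

lemma height_add (p q : ℕ) (S : Finset (Fin n)) (k i : ℕ) :
    height p q S (k + i) = height p q S k + height p q (rotate k S) i := by
  simp only [height, eastCount_add]
  push_cast
  ring

lemma height_rotate (p q : ℕ) (S : Finset (Fin n)) (k : Fin n) (i : ℕ) :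
    height p q (rotate k S) i = height p q S (k + i) - height p q S k := by
  rw [height_add, Fin.cast_val_eq_self]
  ring

def IsDyck (p q : ℕ) (S : Finset (Fin n)) : Prop := ∀ i ≤ n, 0 ≤ height p q S i

instance (p q : ℕ) : DecidablePred (IsDyck (n := n) p q) := fun S => by
  unfold IsDyck; infer_instance

end Words

section CycleLemma

variable {p q : ℕ} [NeZero (p + q)] {S : Finset (Fin (p + q))}

lemma height_self (hS : #S = p) : height p q S (p + q) = 0 := by
  rw [height, eastCount_self, hS]
  push_cast
  ring

lemma height_add_period (hS : #S = p) (i : ℕ) : height p q S (i + (p + q)) = height p q S i := by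
  rw [height_add, height_self (by rwa [card_rotate]), add_zero]

lemma height_modEq (S : Finset (Fin (p + q))) (i : ℕ) :
    height p q S i ≡ -(p * i) [ZMOD (p + q)] := by
  rw [Int.modEq_iff_dvd]
  exact ⟨-eastCount S i, by rw [height]; ring⟩

lemma height_injOn (hpq : Nat.Coprime p q) {a b : ℕ} (ha : a < p + q) (hb : b < p + q)
    (h : height p q S a = height p q S b) : a = b := by
  have hab : p * a ≡ p * b [MOD p + q] := by
    rw [← Int.natCast_modEq_iff]
    push_cast
    have h' : -(p * a : ℤ) ≡ -(p * b) [ZMOD p + q] :=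
      (height_modEq S a).symm.trans (h ▸ height_modEq S b)
    simpa using h'.neg
  exact (hab.cancel_left_of_coprime (by simpa using hpq.symm)).eq_of_lt_of_lt ha hb

lemma isDyck_rotate_iff (hS : #S = p) (k : Fin (p + q)) :
    IsDyck p q (rotate k S) ↔ ∀ m : Fin (p + q), height p q S k ≤ height p q S m := by
  have hk := k.isLt
  simp only [IsDyck, height_rotate, sub_nonneg]
  constructor
  · intro h m
    rcases le_or_gt (k : ℕ) m with hkm | hmk
    · simpa [Nat.add_sub_cancel' hkm] using h (m - k) (by omega)
    · simpa [show (k : ℕ) + (m + (p + q) - k) = m + (p + q) by omega,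
        height_add_period hS] using h (m + (p + q) - k) (by omega)
  · intro h i hi
    rcases lt_or_ge ((k : ℕ) + i) (p + q) with hlt | hge
    · exact h ⟨k + i, hlt⟩
    · rw [show (k : ℕ) + i = (k + i - (p + q)) + (p + q) by omega, height_add_period hS]
      exact h ⟨k + i - (p + q), by omega⟩

theorem existsUnique_isDyck_rotate (hpq : Nat.Coprime p q) (hS : #S = p) :
    ∃! k : Fin (p + q), IsDyck p q (rotate k S) := by
  obtain ⟨k, -, hk⟩ :=
    exists_min_image univ (fun m : Fin (p + q) => height p q S m) univ_nonempty
  refine ⟨k, (isDyck_rotate_iff hS k).2 fun m => hk m (mem_univ m), fun k' hk' => ?_⟩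
  have h₁ := (isDyck_rotate_iff hS k').1 hk' k
  have h₂ := hk k' (mem_univ k')
  exact Fin.ext (height_injOn hpq k'.isLt k.isLt (le_antisymm h₁ h₂))

lemma card_filter_isDyck_rotate (k : Fin (p + q)) :
    #{S ∈ powersetCard p (univ : Finset (Fin (p + q))) | IsDyck p q (rotate k S)} =
      #{S ∈ powersetCard p (univ : Finset (Fin (p + q))) | IsDyck p q S} := by
  refine card_nbij' (rotate k) (rotate (-k)) ?_ ?_ ?_ ?_ <;> intro S hS <;>
    simp_all [rotate_rotate]

theorem mul_card_filter_isDyck (hpq : Nat.Coprime p q) :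
    (p + q) * #{S ∈ powersetCard p (univ : Finset (Fin (p + q))) | IsDyck p q S} =
      (p + q).choose p := by
  let r (S : Finset (Fin (p + q))) (k : Fin (p + q)) : Prop := IsDyck p q (rotate k S)
  have hunique : ∀ S ∈ powersetCard p univ, #(univ.bipartiteAbove r S) = 1 := by
    intro S hS
    rw [mem_powersetCard_univ] at hS
    simpa [r, bipartiteAbove, card_eq_one_iff_existsUnique] using
      existsUnique_isDyck_rotate hpq hS
  have hcount := sum_card_bipartiteAbove_eq_sum_card_bipartiteBelow
    (s := powersetCard p univ) (t := univ) r
  rw [sum_congr rfl hunique] at hcount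
  simpa [r, bipartiteBelow, card_filter_isDyck_rotate] using hcount.symm

end CycleLemma

section Paths

variable {n : ℕ} [NeZero n]

def pathOf (S : Finset (Fin n)) (i : Fin (n + 1)) : ℤ × ℤ := (eastCount S i, i - eastCount S i)

def eastStepSet (f : Fin (n + 1) → ℤ × ℤ) : Finset (Fin n) :=
  {j | f j.succ = f j.castSucc + (1, 0)}

lemma pathOf_zero (S : Finset (Fin n)) : pathOf S 0 = (0, 0) := by
  simp [pathOf, eastCount]

lemma pathOf_last (S : Finset (Fin n)) : pathOf S (Fin.last n) = ((#S : ℤ), (n : ℤ) - #S) := by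
  simp [pathOf, eastCount_self]

lemma pathOf_succ (S : Finset (Fin n)) (j : Fin n) :
    pathOf S j.succ = pathOf S j.castSucc + if j ∈ S then (1, 0) else (0, 1) := by
  simp only [pathOf, Fin.val_succ, Fin.val_castSucc, eastCount_succ, Fin.cast_val_eq_self]
  split_ifs <;> simp only [Prod.mk_add_mk, Prod.mk.injEq] <;> push_cast <;> constructor <;> ring

lemma eastStepSet_pathOf (S : Finset (Fin n)) : eastStepSet (pathOf S) = S := by
  ext j
  simp only [eastStepSet, mem_filter, mem_univ, true_and, pathOf_succ]
  split_ifs with hj <;> simp [hj]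

lemma pathOf_eastStepSet {f : Fin (n + 1) → ℤ × ℤ} (h₀ : f 0 = (0, 0))
    (hstep : ∀ j : Fin n, f j.succ = f j.castSucc + (1, 0) ∨ f j.succ = f j.castSucc + (0, 1)) :
    pathOf (eastStepSet f) = f := by
  funext i
  induction i using Fin.induction with
  | zero => rw [pathOf_zero, h₀]
  | succ j ih =>
    rw [pathOf_succ, ih]
    by_cases hj : j ∈ eastStepSet f
    · rw [if_pos hj]
      exact ((mem_filter.1 hj).2).symm
    · simp only [hj, if_false]
      exact ((hstep j).resolve_left (by simpa [eastStepSet] using hj)).symm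

lemma isDyck_iff_pathOf (p q : ℕ) (S : Finset (Fin n)) :
    IsDyck p q S ↔ ∀ i : Fin (n + 1), (p : ℤ) * (pathOf S i).2 ≤ q * (pathOf S i).1 := by
  simp only [IsDyck, height, pathOf, sub_nonneg, Fin.forall_iff, Nat.lt_succ_iff]

end Paths

theorem card_latticePaths_eq (p q : ℕ) [NeZero (p + q)] :
    Nat.card {f : Fin (p + q + 1) → ℤ × ℤ //
        f 0 = (0, 0) ∧ f (Fin.last (p + q)) = ((p : ℤ), (q : ℤ)) ∧
        (∀ i : Fin (p + q),
          f i.succ = f i.castSucc + (1, 0) ∨ f i.succ = f i.castSucc + (0, 1)) ∧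
        (∀ i : Fin (p + q + 1), (p : ℤ) * (f i).2 ≤ (q : ℤ) * (f i).1)} =
      #{S ∈ powersetCard p (univ : Finset (Fin (p + q))) | IsDyck p q S} := by
  rw [← Nat.card_eq_finsetCard]
  refine Nat.card_congr
    { toFun := fun f => ⟨eastStepSet f.1, ?_⟩
      invFun := fun S => ⟨pathOf S.1, ?_⟩
      left_inv := fun f => Subtype.ext (pathOf_eastStepSet f.2.1 f.2.2.2.1)
      right_inv := fun S => Subtype.ext (eastStepSet_pathOf S.1) }
  · obtain ⟨f, h₀, hlast, hstep, hdiag⟩ := f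
    rw [← pathOf_eastStepSet h₀ hstep] at hlast hdiag
    rw [pathOf_last] at hlast
    simp only [mem_filter, mem_powersetCard_univ, isDyck_iff_pathOf]
    exact ⟨by simpa using (Prod.mk.inj hlast).1, hdiag⟩
  · obtain ⟨S, hS⟩ := S
    simp only [mem_filter, mem_powersetCard_univ, isDyck_iff_pathOf] at hS
    refine ⟨pathOf_zero S, ?_, fun j => ?_, hS.2⟩
    · rw [pathOf_last, hS.1]
      push_cast
      ring_nf
    · rw [pathOf_succ]
      split_ifs <;> simp

end RationalDyck

open RationalDyck in
theorem stmt_3_general (p q : ℕ) (hp : 0 < p) (hpq : Nat.Coprime p q) :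
    Nat.card {f : Fin (p + q + 1) → ℤ × ℤ //
        f 0 = (0, 0) ∧ f (Fin.last (p + q)) = ((p : ℤ), (q : ℤ)) ∧
        (∀ i : Fin (p + q),
          f i.succ = f i.castSucc + (1, 0) ∨ f i.succ = f i.castSucc + (0, 1)) ∧
        (∀ i : Fin (p + q + 1), (p : ℤ) * (f i).2 ≤ (q : ℤ) * (f i).1)} *
      (p.factorial * q.factorial) = (p + q - 1).factorial := by
  have : NeZero (p + q) := ⟨by omega⟩
  apply Nat.eq_of_mul_eq_mul_left (Nat.add_pos_left hp q)
  calc (p + q) * (_ * (p.factorial * q.factorial))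
      = (p + q).choose p * p.factorial * (p + q - p).factorial := by
        rw [card_latticePaths_eq, ← mul_card_filter_isDyck hpq, Nat.add_sub_cancel_left]
        ring
    _ = (p + q) * (p + q - 1).factorial := by
        rw [Nat.choose_mul_factorial_mul_factorial (Nat.le_add_right p q),
          Nat.mul_factorial_pred (by omega)]

/-- The number of lattice paths from `(0,0)` to `(p,q)` (each step increasing exactly one
coordinate by `1`), all of whose vertices `(x,y)` satisfy `p*y ≤ q*x`, times `p! * q!`,
equals `(p+q-1)!`; i.e. the number of such paths is `(p+q-1)!/(p!*q!)`. -/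
theorem stmt_3 (p q : ℕ) (hp : 0 < p) (hq : 0 < q) (hpq : Nat.Coprime p q) :
    Nat.card {f : Fin (p + q + 1) → ℤ × ℤ //
        f 0 = (0, 0) ∧ f (Fin.last (p + q)) = ((p : ℤ), (q : ℤ)) ∧
        (∀ i : Fin (p + q),
          f i.succ = f i.castSucc + (1, 0) ∨ f i.succ = f i.castSucc + (0, 1)) ∧
        (∀ i : Fin (p + q + 1), (p : ℤ) * (f i).2 ≤ (q : ℤ) * (f i).1)} *
      (p.factorial * q.factorial) = (p + q - 1).factorial :=
  stmt_3_general p q hp hpq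
end

section
/- Work in the ring of formal Laurent series in q with coefficients the Laurent polynomials ℤ[a^{±1}, t^{±1}] (power series in q with at most finitely many negative powers of q). Let P̄ = (a²q^{−2} + a²q²t² + a⁴t³) · a^{−1}q · (1 + a²t) · (1 − q²)^{−1}, where (1 − q²)^{−1} = Σ_{m≥0} q^{2m}. Then there exists an element X of this ring, all of whose coefficients are nonnegative integers, such that P̄ − (a q^{−1} + a q + a q³ t² + a³ q³ t³) = (1 + a^{−2} q⁴ t^{−1}) · X. -/
noncomputable section

abbrev C4 : Type := AddMonoidAlgebra ℤ (ℤ × ℤ)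

abbrev LS4 : Type := LaurentSeries C4

/-- `a` -/
def A4 : LS4 := HahnSeries.C (AddMonoidAlgebra.single ((1 : ℤ), (0 : ℤ)) (1 : ℤ))
/-- `a⁻¹` -/
def Ai4 : LS4 := HahnSeries.C (AddMonoidAlgebra.single ((-1 : ℤ), (0 : ℤ)) (1 : ℤ))
/-- `t` -/
def T4 : LS4 := HahnSeries.C (AddMonoidAlgebra.single ((0 : ℤ), (1 : ℤ)) (1 : ℤ))
/-- `t⁻¹` -/
def Ti4 : LS4 := HahnSeries.C (AddMonoidAlgebra.single ((0 : ℤ), (-1 : ℤ)) (1 : ℤ))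
/-- `q` -/
def Q4 : LS4 := HahnSeries.single (1 : ℤ) (1 : C4)
/-- `q⁻¹` -/
def Qi4 : LS4 := HahnSeries.single (-1 : ℤ) (1 : C4)

/-!
After multiplication by `1 - q²` the difference of the two sides becomes a Laurent polynomial,
and it factors as `(1 + a⁻²q⁴t⁻¹) (a³tq⁻¹ + a³t³q + a⁵t⁴q)`. Hence
`X = (a³tq⁻¹ + a³t³q + a⁵t⁴q) ∑ₘ q^{2m}`, a product of series with nonnegative coefficients,
and such series form a subsemiring.
-/

namespace AddMonoidAlgebra

variable {R G : Type*} [Semiring R]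

theorem coeff_single_mem {S : Subsemiring R} (g : G) {r : R} (hr : r ∈ S) (g' : G) :
    (single g r).coeff g' ∈ S := by
  rcases Finsupp.single_apply_mem (a := g) (b := r) g' with h | h <;> rw [coeff_single, h]
  exacts [S.zero_mem, hr]

variable [AddMonoid G]

def coeffsIn (S : Subsemiring R) : Subsemiring (AddMonoidAlgebra R G) where
  carrier := {f | ∀ g, f.coeff g ∈ S}
  zero_mem' _ := S.zero_mem
  add_mem' hf hg g := S.add_mem (hf g) (hg g)
  one_mem' := coeff_single_mem 0 S.one_mem
  mul_mem' {f h} hf hh g := by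
    classical
    rw [coeff_mul]
    refine S.sum_mem fun g₁ _ => S.sum_mem fun g₂ _ => ?_
    dsimp only
    split_ifs
    exacts [S.mul_mem (hf g₁) (hh g₂), S.zero_mem]

theorem single_mem_coeffsIn {S : Subsemiring R} (g : G) {r : R} (hr : r ∈ S) :
    single g r ∈ coeffsIn S :=
  coeff_single_mem g hr

end AddMonoidAlgebra

namespace HahnSeries

variable {Γ R : Type*} [AddCommMonoid Γ] [PartialOrder Γ] [IsOrderedCancelAddMonoid Γ] [Semiring R]

def coeffsIn (S : Subsemiring R) : Subsemiring (HahnSeries Γ R) where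
  carrier := {x | ∀ n, x.coeff n ∈ S}
  zero_mem' _ := S.zero_mem
  add_mem' hx hy n := S.add_mem (hx n) (hy n)
  one_mem' n := by
    rw [coeff_one]
    split_ifs
    exacts [S.one_mem, S.zero_mem]
  mul_mem' hx hy n := by
    rw [coeff_mul]
    exact S.sum_mem fun ij _ => S.mul_mem (hx ij.1) (hy ij.2)

theorem single_mem_coeffsIn {S : Subsemiring R} (n : Γ) {r : R} (hr : r ∈ S) :
    single n r ∈ coeffsIn S := fun n' => by
  rw [coeff_single]
  split_ifs
  exacts [hr, S.zero_mem]

theorem C_mem_coeffsIn {S : Subsemiring R} {r : R} (hr : r ∈ S) :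
    (C r : HahnSeries Γ R) ∈ coeffsIn S :=
  single_mem_coeffsIn 0 hr

theorem ofPowerSeries_mem_coeffsIn {S : Subsemiring R} {f : PowerSeries R}
    (hf : ∀ n, PowerSeries.coeff n f ∈ S) : ofPowerSeries ℤ R f ∈ coeffsIn S := fun n => by
  rw [PowerSeries.coeff_coe]
  split_ifs
  exacts [S.zero_mem, hf _]

end HahnSeries

namespace PowerSeries

def invOneSubXSq (R : Type*) [Semiring R] : PowerSeries R := mk fun n => if Even n then 1 else 0

theorem one_sub_X_sq_mul_invOneSubXSq {R : Type*} [Ring R] :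
    (1 - X ^ 2) * invOneSubXSq R = 1 := by
  ext n
  rw [sub_mul, one_mul, map_sub, coeff_X_pow_mul']
  match n with
  | 0 => simp [invOneSubXSq]
  | 1 => simp [invOneSubXSq]
  | n + 2 => simp [invOneSubXSq, coeff_one, Nat.even_add]

end PowerSeries

def nonnegLS4 : Subsemiring LS4 :=
  HahnSeries.coeffsIn (AddMonoidAlgebra.coeffsIn (Subsemiring.nonneg ℤ))

theorem C_single_mem_nonnegLS4 (m : ℤ × ℤ) :
    (HahnSeries.C (AddMonoidAlgebra.single m 1) : LS4) ∈ nonnegLS4 :=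
  HahnSeries.C_mem_coeffsIn (AddMonoidAlgebra.single_mem_coeffsIn m (Subsemiring.one_mem _))

theorem A4_mem_nonnegLS4 : A4 ∈ nonnegLS4 := C_single_mem_nonnegLS4 _
theorem T4_mem_nonnegLS4 : T4 ∈ nonnegLS4 := C_single_mem_nonnegLS4 _
theorem Q4_mem_nonnegLS4 : Q4 ∈ nonnegLS4 :=
  HahnSeries.single_mem_coeffsIn _ (Subsemiring.one_mem _)
theorem Qi4_mem_nonnegLS4 : Qi4 ∈ nonnegLS4 :=
  HahnSeries.single_mem_coeffsIn _ (Subsemiring.one_mem _)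

def invOneSubQ4Sq : LS4 := HahnSeries.ofPowerSeries ℤ C4 (PowerSeries.invOneSubXSq C4)

theorem one_sub_Q4_sq_mul_invOneSubQ4Sq : (1 - Q4 ^ 2) * invOneSubQ4Sq = 1 := by
  rw [invOneSubQ4Sq, Q4, ← HahnSeries.ofPowerSeries_X, ← map_pow,
    ← map_one (HahnSeries.ofPowerSeries ℤ C4), ← map_sub, ← map_mul,
    PowerSeries.one_sub_X_sq_mul_invOneSubXSq]

theorem invOneSubQ4Sq_mem_nonnegLS4 : invOneSubQ4Sq ∈ nonnegLS4 :=
  HahnSeries.ofPowerSeries_mem_coeffsIn fun n => by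
    rw [PowerSeries.invOneSubXSq, PowerSeries.coeff_mk]
    split_ifs
    exacts [Subsemiring.one_mem _, Subsemiring.zero_mem _]

/-- `a^i t^j q^k` -/
def monomial4 (i j k : ℤ) : LS4 := HahnSeries.single k (AddMonoidAlgebra.single (i, j) 1)

theorem monomial4_mul (i j k i' j' k' : ℤ) :
    monomial4 i j k * monomial4 i' j' k' = monomial4 (i + i') (j + j') (k + k') := by
  rw [monomial4, monomial4, monomial4, HahnSeries.single_mul_single,
    AddMonoidAlgebra.single_mul_single, mul_one, Prod.mk_add_mk]

theorem A4_eq_monomial4 : A4 = monomial4 1 0 0 := rfl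
theorem Ai4_eq_monomial4 : Ai4 = monomial4 (-1) 0 0 := rfl
theorem T4_eq_monomial4 : T4 = monomial4 0 1 0 := rfl
theorem Ti4_eq_monomial4 : Ti4 = monomial4 0 (-1) 0 := rfl
theorem Q4_eq_monomial4 : Q4 = monomial4 0 0 1 := rfl
theorem Qi4_eq_monomial4 : Qi4 = monomial4 0 0 (-1) := rfl

theorem trefoil_numerator_factorization :
    (A4 ^ 2 * Qi4 ^ 2 + A4 ^ 2 * Q4 ^ 2 * T4 ^ 2 + A4 ^ 4 * T4 ^ 3) * Ai4 * Q4 *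
        (1 + A4 ^ 2 * T4) -
      (A4 * Qi4 + A4 * Q4 + A4 * Q4 ^ 3 * T4 ^ 2 + A4 ^ 3 * Q4 ^ 3 * T4 ^ 3) * (1 - Q4 ^ 2) =
    (1 + Ai4 ^ 2 * Q4 ^ 4 * Ti4) *
      (A4 ^ 3 * T4 * Qi4 + A4 ^ 3 * T4 ^ 3 * Q4 + A4 ^ 5 * T4 ^ 4 * Q4) := by
  simp only [A4_eq_monomial4, Ai4_eq_monomial4, T4_eq_monomial4, Ti4_eq_monomial4,
    Q4_eq_monomial4, Qi4_eq_monomial4, pow_succ, pow_zero, one_mul, mul_one, mul_add, add_mul,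
    mul_sub, monomial4_mul]
  ring_nf

theorem stmt_4 :
    ∃ S : LS4, (1 - Q4 ^ 2) * S = 1 ∧
      ∃ X : LS4, (∀ (n : ℤ) (m : ℤ × ℤ), 0 ≤ (X.coeff n).coeff m) ∧
        (A4 ^ 2 * Qi4 ^ 2 + A4 ^ 2 * Q4 ^ 2 * T4 ^ 2 + A4 ^ 4 * T4 ^ 3) * Ai4 * Q4 *
              (1 + A4 ^ 2 * T4) * S -
            (A4 * Qi4 + A4 * Q4 + A4 * Q4 ^ 3 * T4 ^ 2 + A4 ^ 3 * Q4 ^ 3 * T4 ^ 3) =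
          (1 + Ai4 ^ 2 * Q4 ^ 4 * Ti4) * X := by
  refine ⟨invOneSubQ4Sq, one_sub_Q4_sq_mul_invOneSubQ4Sq,
    (A4 ^ 3 * T4 * Qi4 + A4 ^ 3 * T4 ^ 3 * Q4 + A4 ^ 5 * T4 ^ 4 * Q4) * invOneSubQ4Sq, ?_, ?_⟩
  · have hA := A4_mem_nonnegLS4
    have hT := T4_mem_nonnegLS4
    have hQ := Q4_mem_nonnegLS4
    have hQi := Qi4_mem_nonnegLS4
    exact nonnegLS4.mul_mem (by aesop) invOneSubQ4Sq_mem_nonnegLS4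
  · linear_combination invOneSubQ4Sq * trefoil_numerator_factorization +
      (A4 * Qi4 + A4 * Q4 + A4 * Q4 ^ 3 * T4 ^ 2 + A4 ^ 3 * Q4 ^ 3 * T4 ^ 3) *
        one_sub_Q4_sq_mul_invOneSubQ4Sq

end
end

section
/- Let P̃(a,Q,tr,tc) = a⁴(Q^{−4} + tr²tc⁴ + tr²tc⁶ + Q⁴tr⁴tc⁸) + a⁶(Q^{−2}tr³tc⁵ + Q^{−2}tr³tc⁷ + Q²tr⁵tc⁹ + Q²tr⁵tc¹¹) + a⁸tr⁶tc¹², an element of the Laurent polynomial ring ℤ[a^{±1}, Q^{±1}, tr^{±1}, tc^{±1}]. Then P̃ is invariant under the ring endomorphism fixing a, tr, tc and sending Q ↦ Q^{−1}tr^{−1}tc^{−2}; that is, P̃(a, Q^{−1}tr^{−1}tc^{−2}, tr, tc) = P̃(a, Q, tr, tc). -/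
/-- The Laurent monomial `a^i * q^j * tr^k * tc^l` (with variables invertible). -/
noncomputable def monoT {R : Type*} [CommRing R] (a q tr tc : Rˣ) (i j k l : ℤ) : R :=
  ((a ^ i * q ^ j * tr ^ k * tc ^ l : Rˣ) : R)

/-- Tilde-version of the quadruply-graded `S²`-colored homology of the trefoil,
in `(a,Q,tr,tc)` gradings. -/
noncomputable def PtildeTref {R : Type*} [CommRing R] (a Q tr tc : Rˣ) : R :=
  monoT a Q tr tc 4 (-4) 0 0 +
    monoT a Q tr tc 4 0 2 4 +
    monoT a Q tr tc 4 0 2 6 +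
    monoT a Q tr tc 4 4 4 8 +
    monoT a Q tr tc 6 (-2) 3 5 +
    monoT a Q tr tc 6 (-2) 3 7 +
    monoT a Q tr tc 6 2 5 9 +
    monoT a Q tr tc 6 2 5 11 +
    monoT a Q tr tc 8 0 6 12

/-!
The substitution `Q ↦ Q⁻¹ tr⁻ʳ tc⁻ˢ` sends each Laurent monomial to a single monomial, with
grading `(i, j, k, l) ↦ (i, -j, k - r j, l - s j)`. For `(r, s) = (1, 2)` this map is an
involution permuting the nine monomials of `PtildeTref`: it swaps `(4,-4,0,0) ↔ (4,4,4,8)`,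
`(6,-2,3,5) ↔ (6,2,5,9)`, `(6,-2,3,7) ↔ (6,2,5,11)` and fixes the three monomials with `j = 0`.
-/

theorem monoT_inv_mul_zpow_mul_zpow {R : Type*} [CommRing R] (a Q tr tc : Rˣ) (r s i j k l : ℤ) :
    monoT a (Q⁻¹ * tr ^ (-r) * tc ^ (-s)) tr tc i j k l
      = monoT a Q tr tc i (-j) (k - r * j) (l - s * j) := by
  unfold monoT
  congr 1
  rw [sub_eq_neg_add, sub_eq_neg_add, zpow_add, zpow_add]
  simp only [mul_zpow, inv_zpow', ← zpow_mul, neg_mul, mul_comm r, mul_comm s]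
  simp only [mul_comm, mul_assoc, mul_left_comm]

/-- Self-symmetry of the tilde-version `S²`-colored homology of the trefoil:
invariance under `Q ↦ Q⁻¹ tr⁻¹ tc⁻²`. -/
theorem stmt_7 {R : Type*} [CommRing R] (a Q tr tc : Rˣ) :
    PtildeTref a (Q⁻¹ * tr⁻¹ * tc ^ (-2 : ℤ)) tr tc = PtildeTref a Q tr tc := by
  rw [← zpow_neg_one tr]
  simp only [PtildeTref, monoT_inv_mul_zpow_mul_zpow]
  norm_num
  abel
end

section
/- Let P̃S(a,Q,tr,tc) = a⁴(Q^{−4} + tr²tc⁴ + tr²tc⁶ + Q⁴tr⁴tc⁸) + a⁶(Q^{−2}tr³tc⁵ + Q^{−2}tr³tc⁷ + Q²tr⁵tc⁹ + Q²tr⁵tc¹¹) + a⁸tr⁶tc¹² and P̃Λ(a,Q,tr,tc) = a⁴(Q^{−4} + tr⁶tc² + tr⁴tc² + Q⁴tr⁸tc⁴) + a⁶(Q^{−2}tr⁷tc³ + Q^{−2}tr⁵tc³ + Q²tr¹¹tc⁵ + Q²tr⁹tc⁵) + a⁸tr¹²tc⁶, both elements of ℤ[a^{±1}, Q^{±1},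 tr^{±1}, tc^{±1}]. Then P̃Λ(a,Q,tr,tc) = P̃S(a,Q,tc,tr), i.e. the two Laurent polynomials are exchanged by swapping the variables tr and tc. -/
/-- The Laurent monomial `a^i * q^j * tr^k * tc^l` (with variables invertible). -/
noncomputable def monoM {R : Type*} [CommRing R] (a q tr tc : Rˣ) (i j k l : ℤ) : R :=
  ((a ^ i * q ^ j * tr ^ k * tc ^ l : Rˣ) : R)

/-- Tilde-version of the `S²`-colored homology of the trefoil. -/
noncomputable def PtildeS {R : Type*} [CommRing R] (a Q tr tc : Rˣ) : R :=
  monoM a Q tr tc 4 (-4) 0 0 +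
    monoM a Q tr tc 4 0 2 4 +
    monoM a Q tr tc 4 0 2 6 +
    monoM a Q tr tc 4 4 4 8 +
    monoM a Q tr tc 6 (-2) 3 5 +
    monoM a Q tr tc 6 (-2) 3 7 +
    monoM a Q tr tc 6 2 5 9 +
    monoM a Q tr tc 6 2 5 11 +
    monoM a Q tr tc 8 0 6 12

/-- Tilde-version of the `Λ²`-colored homology of the trefoil. -/
noncomputable def PtildeL {R : Type*} [CommRing R] (a Q tr tc : Rˣ) : R :=
  monoM a Q tr tc 4 (-4) 0 0 +
    monoM a Q tr tc 4 0 6 2 +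
    monoM a Q tr tc 4 0 4 2 +
    monoM a Q tr tc 4 4 8 4 +
    monoM a Q tr tc 6 (-2) 7 3 +
    monoM a Q tr tc 6 (-2) 5 3 +
    monoM a Q tr tc 6 2 11 5 +
    monoM a Q tr tc 6 2 9 5 +
    monoM a Q tr tc 8 0 12 6

theorem monoM_swap {R : Type*} [CommRing R] (a q tr tc : Rˣ) (i j k l : ℤ) :
    monoM a q tc tr i j k l = monoM a q tr tc i j l k := by
  rw [monoM, monoM, mul_right_comm]

/-- Mirror symmetry: the tilde `Λ²`- and `S²`-colored homologies of the trefoil are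
exchanged by swapping `tr` and `tc`. -/
theorem stmt_8 {R : Type*} [CommRing R] (a Q tr tc : Rˣ) :
    PtildeL a Q tr tc = PtildeS a Q tc tr := by
  simp only [PtildeL, PtildeS, monoM_swap]
  abel
end

section
/- Let P̃(a,Q,tr,tc) = a⁴tr⁴tc⁸ + a²(Q^{−2}tr·tc + Q^{−2}tr·tc³ + tr²tc² + tr²tc⁴ + Q²tr³tc⁵ + Q²tr³tc⁷) + (Q^{−4}tr^{−2}tc^{−4} + Q^{−2}tr^{−1}tc^{−3} + Q^{−2}tr^{−1}tc^{−1} + tc^{−2} + 3 + tc² + Q²tr·tc + Q²tr·tc³ + Q⁴tr²tc⁴) + a^{−2}(Q^{−2}tr^{−3}tc^{−7} + Q^{−2}tr^{−3}tc^{−5} + tr^{−2}tc^{−4} + tr^{−2}tc^{−2} + Q²tr^{−1}tc^{−3} + Q²tr^{−1}tc^{−1}) + a^{−4}tr^{−4}tc^{−8}, an element of ℤ[a^{±1}, Q^{±1}, tr^{±1}, tc^{±1}]. Then P̃ is invariant under the substitution Q ↦ Q^{−1}tr^{−1}tc^{−2} (with a, tr, tc fixed): P̃(a, Q^{−1}tr^{−1}tc^{−2},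 tr, tc) = P̃(a, Q, tr, tc). -/
/-- The Laurent monomial `a^i * q^j * tr^k * tc^l` (with variables invertible). -/
noncomputable def monoG {R : Type*} [CommRing R] (a q tr tc : Rˣ) (i j k l : ℤ) : R :=
  ((a ^ i * q ^ j * tr ^ k * tc ^ l : Rˣ) : R)

/-- Tilde-version of the quadruply-graded `S²`-colored homology of the figure-eight knot. -/
noncomputable def PtildeFigEight {R : Type*} [CommRing R] (a Q tr tc : Rˣ) : R :=
  monoG a Q tr tc 4 0 4 8 +
    monoG a Q tr tc 2 (-2) 1 1 +
    monoG a Q tr tc 2 (-2) 1 3 +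
    monoG a Q tr tc 2 0 2 2 +
    monoG a Q tr tc 2 0 2 4 +
    monoG a Q tr tc 2 2 3 5 +
    monoG a Q tr tc 2 2 3 7 +
    monoG a Q tr tc 0 (-4) (-2) (-4) +
    monoG a Q tr tc 0 (-2) (-1) (-3) +
    monoG a Q tr tc 0 (-2) (-1) (-1) +
    monoG a Q tr tc 0 0 0 (-2) +
    3 * monoG a Q tr tc 0 0 0 0 +
    monoG a Q tr tc 0 0 0 2 +
    monoG a Q tr tc 0 2 1 1 +
    monoG a Q tr tc 0 2 1 3 +
    monoG a Q tr tc 0 4 2 4 +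
    monoG a Q tr tc (-2) (-2) (-3) (-7) +
    monoG a Q tr tc (-2) (-2) (-3) (-5) +
    monoG a Q tr tc (-2) 0 (-2) (-4) +
    monoG a Q tr tc (-2) 0 (-2) (-2) +
    monoG a Q tr tc (-2) 2 (-1) (-3) +
    monoG a Q tr tc (-2) 2 (-1) (-1) +
    monoG a Q tr tc (-4) 0 (-4) (-8)

/-! The substitution acts on degrees by `(i, j, k, l) ↦ (i, -j, k - j, l - 2 j)`, an involution
that permutes the 23 monomials of `PtildeFigEight` among themselves and fixes `(0, 0, 0, 0)`,
which carries the coefficient 3. -/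

theorem monoG_inv_mul_zpow_mul_zpow {R : Type*} [CommRing R] (a Q tr tc : Rˣ) (r s i j k l : ℤ) :
    monoG a (Q⁻¹ * tr ^ (-r) * tc ^ (-s)) tr tc i j k l
      = monoG a Q tr tc i (-j) (k - r * j) (l - s * j) := by
  unfold monoG
  congr 1
  simp only [mul_zpow, inv_zpow', ← zpow_mul, zpow_sub, zpow_neg]
  simp only [mul_assoc, mul_comm, mul_left_comm]

/-- Self-symmetry of the tilde `S²`-colored homology of the figure-eight knot:
invariance under `Q ↦ Q⁻¹ tr⁻¹ tc⁻²`. -/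
theorem stmt_12 {R : Type*} [CommRing R] (a Q tr tc : Rˣ) :
    PtildeFigEight a (Q⁻¹ * tr⁻¹ * tc ^ (-2 : ℤ)) tr tc = PtildeFigEight a Q tr tc := by
  rw [← zpow_neg_one tr]
  simp only [PtildeFigEight, monoG_inv_mul_zpow_mul_zpow]
  norm_num
  ring
end
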